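/- arXiv:2112.03125 — 4 statements merged into one kernel-verified Lean document; each statement's English description precedes it below -/
import Mathlib

section
/- Let k ≥ 0 be an integer and let P₁, P₂, P₃ be real polynomials in x, y, z of total degree at most k−1. Then x P₁ + y P₂ + z P₃ = 0 if and only if there exist polynomials λ ∈ 𝒫_{k−2} depending only on y and z, β ∈ 𝒫_{k−2} depending only on x and z, γ ∈ 𝒫_{k−2} depending only on x and y, and C¹, C², C³ ∈ 𝒫_{k−3} with C¹ + C² + C³ = 0, such that P₁ = y z C¹ + y γ − z β, P₂ = x z C² − x γ + z λ, and P₃ = x y C³ + x β − y λ. -/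
open MvPolynomial

noncomputable section

/-- Real polynomials in the three variables `x, y, z` (indexed `0, 1, 2`). -/
abbrev P3 := MvPolynomial (Fin 3) ℝ

/-- Membership in `𝒫_m`, the space of polynomials of total degree at most `m`,
with the convention `𝒫_m = {0}` for `m < 0`. -/
def memP (m : ℤ) (p : P3) : Prop := p = 0 ∨ (p.totalDegree : ℤ) ≤ m

namespace Helper

/-- division by `X i` -/
def Dv (i : Fin 3) (p : P3) : P3 := p.divMonomial (Finsupp.single i 1)
/-- the part of `p` with no `X i` -/
def Ev (i : Fin 3) (p : P3) : P3 := p.modMonomial (Finsupp.single i 1)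

lemma coeff_Dv (i : Fin 3) (p : P3) (m : Fin 3 →₀ ℕ) :
    coeff m (Dv i p) = coeff (Finsupp.single i 1 + m) p := rfl

lemma coeff_Ev (i : Fin 3) (p : P3) (m : Fin 3 →₀ ℕ) :
    coeff m (Ev i p) = if m i = 0 then coeff m p else 0 := by
  by_cases h : m i = 0
  · rw [if_pos h, Ev, coeff_modMonomial_of_not_le]
    simp [Finsupp.single_le_iff, h]
  · rw [if_neg h, Ev, coeff_modMonomial_of_le]
    simpa [Finsupp.single_le_iff] using Nat.one_le_iff_ne_zero.2 h

lemma decomp (i : Fin 3) (p : P3) : X i * Dv i p + Ev i p = p :=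
  divMonomial_add_modMonomial_single p i

lemma Ev_X_mul (i : Fin 3) (q : P3) : Ev i (X i * q) = 0 :=
  X_mul_modMonomial i q

lemma Dv_X_mul (i : Fin 3) (q : P3) : Dv i (X i * q) = q :=
  X_mul_divMonomial i q

lemma Ev_add (i : Fin 3) (p q : P3) : Ev i (p + q) = Ev i p + Ev i q := by
  ext m
  simp only [coeff_Ev, coeff_add]
  split_ifs <;> simp

lemma Ev_zero (i : Fin 3) : Ev i (0 : P3) = 0 := by
  ext m; simp [coeff_Ev]

lemma Ev_neg (i : Fin 3) (p : P3) : Ev i (-p) = -(Ev i p) := by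
  ext m; simp only [coeff_Ev, coeff_neg]; split_ifs <;> simp

lemma Dv_neg (i : Fin 3) (p : P3) : Dv i (-p) = -(Dv i p) := by
  ext m; simp [coeff_Dv, coeff_neg]

lemma Ev_X_mul_ne {i j : Fin 3} (h : i ≠ j) (q : P3) :
    Ev i (X j * q) = X j * Ev i q := by
  classical
  ext m
  rw [coeff_Ev, coeff_X_mul', coeff_X_mul']
  have hsub : (m - Finsupp.single j 1 : Fin 3 →₀ ℕ) i = m i := by
    simp [Finsupp.tsub_apply, Finsupp.single_apply, Ne.symm h]
  by_cases h1 : m i = 0 <;> by_cases h2 : j ∈ m.support <;>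
    simp [h1, h2, coeff_Ev, hsub]

lemma Dv_X_mul_ne {i j : Fin 3} (h : i ≠ j) (q : P3) :
    Dv i (X j * q) = X j * Dv i q := by
  classical
  ext m
  rw [coeff_Dv, coeff_X_mul', coeff_X_mul']
  have happ : (Finsupp.single i 1 + m : Fin 3 →₀ ℕ) j = m j := by
    simp [Finsupp.add_apply, Finsupp.single_apply, h]
  have hmem : j ∈ (Finsupp.single i 1 + m).support ↔ j ∈ m.support := by
    simp [Finsupp.mem_support_iff, happ]
  by_cases h2 : j ∈ m.support
  · rw [if_pos (hmem.2 h2), if_pos h2, coeff_Dv]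
    congr 1
    ext x
    simp only [Finsupp.add_apply, Finsupp.tsub_apply, Finsupp.single_apply]
    have hj : 1 ≤ m j := by
      rw [Finsupp.mem_support_iff] at h2; omega
    by_cases hjx : j = x
    · subst hjx
      rw [if_neg (fun hh : i = j => h hh), if_pos rfl]
      omega
    · rw [if_neg hjx]
      split_ifs <;> omega
  · rw [if_neg (fun hh => h2 (hmem.1 hh)), if_neg h2]

lemma Ev_Dv_comm {i j : Fin 3} (h : i ≠ j) (p : P3) :
    Ev i (Dv j p) = Dv j (Ev i p) := by
  ext m
  rw [coeff_Ev, coeff_Dv, coeff_Dv, coeff_Ev]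
  have happ : (Finsupp.single j 1 + m : Fin 3 →₀ ℕ) i = m i := by
    simp [Finsupp.add_apply, Finsupp.single_apply, Ne.symm h]
  rw [happ]

lemma X_mul_cancel {i : Fin 3} {p : P3} (h : X i * p = 0) : p = 0 := by
  rcases mul_eq_zero.1 h with h' | h'
  · exact absurd h' (X_ne_zero i)
  · exact h'

-- vars lemmas
lemma not_mem_vars_Ev_self (i : Fin 3) (p : P3) : i ∉ (Ev i p).vars := by
  rw [mem_vars]
  rintro ⟨d, hd, hid⟩
  rw [mem_support_iff, coeff_Ev] at hd
  rw [Finsupp.mem_support_iff] at hid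
  by_cases h : d i = 0
  · exact hid h
  · exact hd (if_neg h)

lemma not_mem_vars_Ev {i : Fin 3} (j : Fin 3) {p : P3} (h : i ∉ p.vars) :
    i ∉ (Ev j p).vars := by
  rw [mem_vars]
  rintro ⟨d, hd, hid⟩
  rw [mem_support_iff, coeff_Ev] at hd
  by_cases h2 : d j = 0
  · rw [if_pos h2] at hd
    exact h ((mem_vars _).2 ⟨d, mem_support_iff.2 hd, hid⟩)
  · exact hd (if_neg h2)

lemma not_mem_vars_Dv {i : Fin 3} (j : Fin 3) {p : P3} (h : i ∉ p.vars) :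
    i ∉ (Dv j p).vars := by
  rw [mem_vars]
  rintro ⟨d, hd, hid⟩
  rw [mem_support_iff, coeff_Dv] at hd
  refine h ((mem_vars _).2 ⟨Finsupp.single j 1 + d, mem_support_iff.2 hd, ?_⟩)
  rw [Finsupp.mem_support_iff] at hid ⊢
  rw [Finsupp.add_apply]
  omega

-- memP lemmas
lemma memP_mono {m m' : ℤ} (h : m ≤ m') {p : P3} (hp : memP m p) : memP m' p :=
  hp.imp id (fun h2 => le_trans h2 h)

lemma memP_neg {m : ℤ} {p : P3} (hp : memP m p) : memP m (-p) := by
  rcases hp with h | h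
  · exact Or.inl (by rw [h, neg_zero])
  · exact Or.inr (by rwa [totalDegree_neg])

lemma memP_Ev {m : ℤ} (i : Fin 3) {p : P3} (hp : memP m p) : memP m (Ev i p) := by
  rcases hp with h | h
  · exact Or.inl (by rw [h, Ev_zero])
  · refine Or.inr (le_trans ?_ h)
    have : (Ev i p).support ⊆ p.support := by
      intro d hd
      rw [mem_support_iff, coeff_Ev] at hd
      by_cases h2 : d i = 0
      · exact mem_support_iff.2 (by rwa [if_pos h2] at hd)
      · exact absurd (if_neg h2) hd
    exact_mod_cast totalDegree_le_of_support_subset this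

lemma memP_Dv {m : ℤ} (i : Fin 3) {p : P3} (hp : memP m p) : memP (m - 1) (Dv i p) := by
  by_cases hz : Dv i p = 0
  · exact Or.inl hz
  rcases hp with h | h
  · exact Or.inl (by rw [h]; ext d; simp [coeff_Dv])
  refine Or.inr ?_
  have key : ∀ d ∈ (Dv i p).support, (d.sum fun _ e => e) + 1 ≤ p.totalDegree := by
    intro d hd
    rw [mem_support_iff, coeff_Dv] at hd
    have hle := le_totalDegree (mem_support_iff.2 hd)
    have hsum : ((Finsupp.single i 1 + d).sum fun _ e => e)
        = 1 + (d.sum fun _ e => e) := by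
      rw [Finsupp.sum_add_index' (fun _ => rfl) (fun _ _ _ => rfl),
        Finsupp.sum_single_index rfl]
    omega
  obtain ⟨d, hd⟩ := (MvPolynomial.ne_zero_iff.1 hz)
  have hd' : d ∈ (Dv i p).support := mem_support_iff.2 hd
  have h1 : 1 ≤ p.totalDegree := le_trans (by omega) (key d hd')
  have h2 : (Dv i p).totalDegree ≤ p.totalDegree - 1 :=
    Finset.sup_le fun s hs => by have := key s hs; omega
  have : ((Dv i p).totalDegree : ℤ) ≤ (p.totalDegree : ℤ) - 1 := by
    have := Nat.cast_le (α := ℤ).2 h2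
    rwa [Nat.cast_sub h1] at this
  omega

end Helper

lemma supported_of_not_mem {p : P3} {i : Fin 3} {s : Set (Fin 3)}
    (h : i ∉ p.vars) (hs : ∀ j : Fin 3, j ≠ i → j ∈ s) : p ∈ supported ℝ s := by
  rw [mem_supported]
  intro j hj
  rcases eq_or_ne j i with rfl | hne
  · exact absurd (Finset.mem_coe.1 hj) h
  · exact hs j hne

open Helper in
/-- Explicit characterization of triples `(P₁, P₂, P₃)` of polynomials of degree at most `k-1`
with `x P₁ + y P₂ + z P₃ = 0`. -/
theorem trace_free_characterization (k : ℕ) (P : Fin 3 → P3)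
    (hdeg : ∀ i, memP ((k : ℤ) - 1) (P i)) :
    X 0 * P 0 + X 1 * P 1 + X 2 * P 2 = 0 ↔
    ∃ lam beta gamma C1 C2 C3 : P3,
      memP ((k : ℤ) - 2) lam ∧ lam ∈ supported ℝ ({1, 2} : Set (Fin 3)) ∧
      memP ((k : ℤ) - 2) beta ∧ beta ∈ supported ℝ ({0, 2} : Set (Fin 3)) ∧
      memP ((k : ℤ) - 2) gamma ∧ gamma ∈ supported ℝ ({0, 1} : Set (Fin 3)) ∧
      memP ((k : ℤ) - 3) C1 ∧ memP ((k : ℤ) - 3) C2 ∧ memP ((k : ℤ) - 3) C3 ∧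
      C1 + C2 + C3 = 0 ∧
      P 0 = X 1 * X 2 * C1 + X 1 * gamma - X 2 * beta ∧
      P 1 = X 0 * X 2 * C2 - X 0 * gamma + X 2 * lam ∧
      P 2 = X 0 * X 1 * C3 + X 0 * beta - X 1 * lam := by
  constructor
  · intro h
    -- partial "evaluations" of the relation
    have h2 : X 0 * Ev 2 (P 0) + X 1 * Ev 2 (P 1) = 0 := by
      have hh := congrArg (Ev 2) h
      rwa [Ev_zero, Ev_add, Ev_add, Ev_X_mul, add_zero,
        Ev_X_mul_ne (by decide : (2 : Fin 3) ≠ 0),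
        Ev_X_mul_ne (by decide : (2 : Fin 3) ≠ 1)] at hh
    have h1 : X 0 * Ev 1 (P 0) + X 2 * Ev 1 (P 2) = 0 := by
      have hh := congrArg (Ev 1) h
      rwa [Ev_zero, Ev_add, Ev_add, Ev_X_mul, add_zero,
        Ev_X_mul_ne (by decide : (1 : Fin 3) ≠ 0),
        Ev_X_mul_ne (by decide : (1 : Fin 3) ≠ 2)] at hh
    have h0 : X 1 * Ev 0 (P 1) + X 2 * Ev 0 (P 2) = 0 := by
      have hh := congrArg (Ev 0) h
      rwa [Ev_zero, Ev_add, Ev_add, Ev_X_mul, zero_add,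
        Ev_X_mul_ne (by decide : (0 : Fin 3) ≠ 1),
        Ev_X_mul_ne (by decide : (0 : Fin 3) ≠ 2)] at hh
    have e120 : Ev 1 (Ev 2 (P 0)) = 0 := by
      have hh := congrArg (Ev 1) h2
      rw [Ev_zero, Ev_add, Ev_X_mul, add_zero,
        Ev_X_mul_ne (by decide : (1 : Fin 3) ≠ 0)] at hh
      exact X_mul_cancel hh
    have e210 : Ev 2 (Ev 1 (P 0)) = 0 := by
      have hh := congrArg (Ev 2) h1
      rw [Ev_zero, Ev_add, Ev_X_mul, add_zero,
        Ev_X_mul_ne (by decide : (2 : Fin 3) ≠ 0)] at hh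
      exact X_mul_cancel hh
    have e201 : Ev 2 (Ev 0 (P 1)) = 0 := by
      have hh := congrArg (Ev 2) h0
      rw [Ev_zero, Ev_add, Ev_X_mul, add_zero,
        Ev_X_mul_ne (by decide : (2 : Fin 3) ≠ 1)] at hh
      exact X_mul_cancel hh
    -- divisibility facts
    have hg : Ev 2 (P 0) = X 1 * Dv 1 (Ev 2 (P 0)) := by
      conv_lhs => rw [← decomp 1 (Ev 2 (P 0))]
      rw [e120, add_zero]
    have hb : Ev 1 (P 0) = X 2 * Dv 2 (Ev 1 (P 0)) := by
      conv_lhs => rw [← decomp 2 (Ev 1 (P 0))]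
      rw [e210, add_zero]
    have hl : Ev 0 (P 1) = X 2 * Dv 2 (Ev 0 (P 1)) := by
      conv_lhs => rw [← decomp 2 (Ev 0 (P 1))]
      rw [e201, add_zero]
    have hEv0P2 : Ev 0 (P 2) = -(X 1 * Dv 2 (Ev 0 (P 1))) := by
      have hx : X 2 * (Ev 0 (P 2) + X 1 * Dv 2 (Ev 0 (P 1))) = 0 := by
        linear_combination h0 - X 1 * hl
      linear_combination X_mul_cancel hx
    have hEv2P1 : Ev 2 (P 1) = -(X 0 * Dv 1 (Ev 2 (P 0))) := by
      have hx : X 1 * (Ev 2 (P 1) + X 0 * Dv 1 (Ev 2 (P 0))) = 0 := by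
        linear_combination h2 - X 0 * hg
      linear_combination X_mul_cancel hx
    have hEv1P2 : Ev 1 (P 2) = -(X 0 * Dv 2 (Ev 1 (P 0))) := by
      have hx : X 2 * (Ev 1 (P 2) + X 0 * Dv 2 (Ev 1 (P 0))) = 0 := by
        linear_combination h1 - X 0 * hb
      linear_combination X_mul_cancel hx
    -- quotient decompositions
    have hA : Dv 2 (P 0) = X 1 * Dv 1 (Dv 2 (P 0)) + Dv 2 (Ev 1 (P 0)) := by
      conv_lhs => rw [← decomp 1 (Dv 2 (P 0))]
      rw [Ev_Dv_comm (by decide : (1 : Fin 3) ≠ 2)]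
    have hB : Dv 2 (P 1) = X 0 * Dv 0 (Dv 2 (P 1)) + Dv 2 (Ev 0 (P 1)) := by
      conv_lhs => rw [← decomp 0 (Dv 2 (P 1))]
      rw [Ev_Dv_comm (by decide : (0 : Fin 3) ≠ 2)]
    have hC : Dv 1 (P 2) = X 0 * Dv 0 (Dv 1 (P 2)) + -Dv 2 (Ev 0 (P 1)) := by
      conv_lhs => rw [← decomp 0 (Dv 1 (P 2))]
      rw [Ev_Dv_comm (by decide : (0 : Fin 3) ≠ 1), hEv0P2, Dv_neg, Dv_X_mul]
    -- the three representation formulas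
    have d20 := decomp 2 (P 0)
    have d21 := decomp 2 (P 1)
    have d12 := decomp 1 (P 2)
    have eP0 : P 0 = X 1 * X 2 * Dv 1 (Dv 2 (P 0))
        + X 1 * Dv 1 (Ev 2 (P 0)) - X 2 * (-(Dv 2 (Ev 1 (P 0)))) := by
      linear_combination X 2 * hA + hg - d20
    have eP1 : P 1 = X 0 * X 2 * Dv 0 (Dv 2 (P 1))
        - X 0 * Dv 1 (Ev 2 (P 0)) + X 2 * Dv 2 (Ev 0 (P 1)) := by
      linear_combination X 2 * hB + hEv2P1 - d21
    have eP2 : P 2 = X 0 * X 1 * Dv 0 (Dv 1 (P 2))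
        + X 0 * (-(Dv 2 (Ev 1 (P 0)))) - X 1 * Dv 2 (Ev 0 (P 1)) := by
      linear_combination X 1 * hC + hEv1P2 - d12
    have hsum : Dv 1 (Dv 2 (P 0)) + Dv 0 (Dv 2 (P 1)) + Dv 0 (Dv 1 (P 2)) = 0 := by
      have hx : X 0 * (X 1 * (X 2 *
          (Dv 1 (Dv 2 (P 0)) + Dv 0 (Dv 2 (P 1)) + Dv 0 (Dv 1 (P 2))))) = 0 := by
        linear_combination h - X 0 * eP0 - X 1 * eP1 - X 2 * eP2
      exact X_mul_cancel (X_mul_cancel (X_mul_cancel hx))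
    refine ⟨Dv 2 (Ev 0 (P 1)), -(Dv 2 (Ev 1 (P 0))), Dv 1 (Ev 2 (P 0)),
      Dv 1 (Dv 2 (P 0)), Dv 0 (Dv 2 (P 1)), Dv 0 (Dv 1 (P 2)),
      memP_mono (by omega) (memP_Dv 2 (memP_Ev 0 (hdeg 1))),
      supported_of_not_mem (not_mem_vars_Dv 2 (not_mem_vars_Ev_self 0 (P 1)))
        (by intro j hj; fin_cases j <;> first | exact absurd rfl hj | exact Or.inl rfl | exact Or.inr rfl),
      memP_neg (memP_mono (by omega) (memP_Dv 2 (memP_Ev 1 (hdeg 0)))),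
      supported_of_not_mem (i := 1)
        (by rw [vars_neg]; exact not_mem_vars_Dv 2 (not_mem_vars_Ev_self 1 (P 0)))
        (by intro j hj; fin_cases j <;> first | exact absurd rfl hj | exact Or.inl rfl | exact Or.inr rfl),
      memP_mono (by omega) (memP_Dv 1 (memP_Ev 2 (hdeg 0))),
      supported_of_not_mem (not_mem_vars_Dv 1 (not_mem_vars_Ev_self 2 (P 0)))
        (by intro j hj; fin_cases j <;> first | exact absurd rfl hj | exact Or.inl rfl | exact Or.inr rfl),
      memP_mono (by omega) (memP_Dv 1 (memP_Dv 2 (hdeg 0))),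
      memP_mono (by omega) (memP_Dv 0 (memP_Dv 2 (hdeg 1))),
      memP_mono (by omega) (memP_Dv 0 (memP_Dv 1 (hdeg 2))),
      hsum, eP0, eP1, eP2⟩
  · rintro ⟨lam, beta, gamma, C1, C2, C3, -, -, -, -, -, -, -, -, -, hsum, e1, e2, e3⟩
    linear_combination X 0 * e1 + X 1 * e2 + X 2 * e3 + X 0 * X 1 * X 2 * hsum
end
end

section
/- For every integer k ≥ 0, the row-wise divergence map M ↦ (Σ_{j=1}^{3} ∂_{x_j}(x_j P_i))_{i=1,2,3} is a linear isomorphism from the space {M(P₁,P₂,P₃) : P₁, P₂, P₃ ∈ 𝒫_k and x P₁ + y P₂ + z P₃ = 0} onto G^{c,k}. -/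
open MvPolynomial

noncomputable section

/-- The row-wise divergence of the matrix `M(P₁,P₂,P₃)` with entries `M i j = x_j * P i`:
its `i`-th component is `Σ_j ∂_{x_j} (x_j P_i)`. -/
def rowDiv (P : Fin 3 → P3) : Fin 3 → P3 := fun i => ∑ j : Fin 3, pderiv j (X j * P i)

/-- The Koszul cross product `x × w`. -/
def crossX (w : Fin 3 → P3) : Fin 3 → P3 :=
  ![X 1 * w 2 - X 2 * w 1, X 2 * w 0 - X 0 * w 2, X 0 * w 1 - X 1 * w 0]

/-!
The row-wise divergence acts on each component as `E + 3`, where `E = Σ xⱼ ∂ⱼ` is the Euler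
operator; it multiplies the homogeneous part of degree `d` by `d + 3`, so it is invertible, keeps
degrees, and keeps the condition `x · P = 0` because multiplication by `xⱼ` raises all degrees by
one. By exactness of the Koszul complex, the traceless triples in `𝒫_k` are exactly the fields
`x × w` with `w ∈ 𝒫_{k-1}`, so the divergence is a bijection of this space onto itself.
-/

namespace MvPolynomial

variable {σ R : Type*} [CommSemiring R]

/-- Multiplies the homogeneous component of degree `d` by `g d`. -/
def degreeScale (g : ℕ → R) : MvPolynomial σ R →ₗ[R] MvPolynomial σ R :=
  Finsupp.lsum R (fun n => g n.degree • monomial n) ∘ₗ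
    (AddMonoidAlgebra.coeffLinearEquiv R).toLinearMap

theorem degreeScale_monomial (g : ℕ → R) (n : σ →₀ ℕ) (a : R) :
    degreeScale g (monomial n a) = monomial n (g n.degree * a) := by
  simp [degreeScale, smul_monomial]

@[simp]
theorem coeff_degreeScale (g : ℕ → R) (p : MvPolynomial σ R) (n : σ →₀ ℕ) :
    coeff n (degreeScale g p) = g n.degree * coeff n p := by
  classical
  induction p using MvPolynomial.induction_on' with
  | monomial m a =>
    rw [degreeScale_monomial, coeff_monomial, coeff_monomial]
    split_ifs with h <;> simp [h]
  | add p q hp hq => simp [hp, hq, mul_add]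

theorem support_degreeScale_subset (g : ℕ → R) (p : MvPolynomial σ R) :
    (degreeScale g p).support ⊆ p.support := fun n hn => by
  rw [mem_support_iff, coeff_degreeScale] at hn
  exact mem_support_iff.2 (right_ne_zero_of_mul hn)

theorem leftInverse_degreeScale {g h : ℕ → R} (hgh : ∀ d, g d * h d = 1) :
    Function.LeftInverse (degreeScale (σ := σ) g) (degreeScale h) := fun p => by
  ext n
  simp [← mul_assoc, hgh]

theorem X_mul_degreeScale (g : ℕ → R) (i : σ) (p : MvPolynomial σ R) :
    X i * degreeScale g p = degreeScale (fun d => g (d - 1)) (X i * p) := by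
  induction p using MvPolynomial.induction_on' with
  | monomial m a => simp [degreeScale_monomial, X, monomial_mul]
  | add p q hp hq => simp only [map_add, mul_add, hp, hq]

theorem sum_X_mul_pderiv [Fintype σ] (p : MvPolynomial σ R) :
    ∑ i, X i * pderiv i p = degreeScale (fun d => (d : R)) p := by
  induction p using MvPolynomial.induction_on' with
  | monomial m a =>
    rw [degreeScale_monomial, ← nsmul_eq_mul, ← smul_monomial, Finsupp.degree_eq_sum,
      Finset.sum_smul]
    simp only [X_mul_pderiv_monomial]
  | add p q hp hq => simp only [map_add, mul_add, Finset.sum_add_distrib, hp, hq]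

theorem sum_pderiv_X_mul [Fintype σ] (p : MvPolynomial σ R) :
    ∑ i, pderiv i (X i * p) = degreeScale (fun d => (d + Fintype.card σ : R)) p := by
  simp only [pderiv_mul, pderiv_X_self, one_mul, Finset.sum_add_distrib, Finset.sum_const,
    Finset.card_univ, sum_X_mul_pderiv]
  ext n
  rw [coeff_add, coeff_smul, coeff_degreeScale, coeff_degreeScale, nsmul_eq_mul]
  ring

end MvPolynomial

theorem memP_iff_forall_degree_le {m : ℤ} {p : P3} :
    memP m p ↔ ∀ n ∈ p.support, (n.degree : ℤ) ≤ m := by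
  constructor
  · rintro (rfl | h) n hn
    · simp at hn
    · exact le_trans (by exact_mod_cast le_totalDegree hn) h
  · intro h
    by_cases hp : p = 0
    · exact Or.inl hp
    · obtain ⟨n, hn, hdeg⟩ := Finset.exists_mem_eq_sup _ (support_nonempty.2 hp)
        (fun s : Fin 3 →₀ ℕ => s.sum fun _ e => e)
      right
      rw [totalDegree, hdeg]
      exact h n hn

theorem memP_of_support_subset {m : ℤ} {p q : P3} (hp : memP m p)
    (hqp : q.support ⊆ p.support) : memP m q := by
  rw [memP_iff_forall_degree_le] at hp ⊢
  exact fun n hn => hp n (hqp hn)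

theorem memP.sub {m : ℤ} {p q : P3} (hp : memP m p) (hq : memP m q) : memP m (p - q) := by
  classical
  rw [memP_iff_forall_degree_le] at hp hq ⊢
  intro n hn
  rcases Finset.mem_union.1 (support_sub _ p q hn) with h | h
  exacts [hp n h, hq n h]

theorem memP.X_mul {m : ℤ} {p : P3} (i : Fin 3) (hp : memP (m - 1) p) : memP m (X i * p) := by
  rw [memP_iff_forall_degree_le] at hp ⊢
  intro n hn
  obtain ⟨n', hn', rfl⟩ := Finset.mem_map.1 (support_X_mul i p ▸ hn)
  have := hp n' hn'
  simp only [addLeftEmbedding_apply, map_add, Finsupp.degree_single]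
  omega

theorem memP.pderiv {m : ℤ} {p : P3} (i : Fin 3) (hp : memP m p) :
    memP (m - 1) (pderiv i p) := by
  rw [memP_iff_forall_degree_le] at hp ⊢
  intro n hn
  rw [mem_support_iff, coeff_pderiv] at hn
  have := hp _ (mem_support_iff.2 (left_ne_zero_of_mul hn))
  simp only [map_add, Finsupp.degree_single] at this
  omega

def curl (u : Fin 3 → P3) : Fin 3 → P3 :=
  ![pderiv 1 (u 2) - pderiv 2 (u 1), pderiv 2 (u 0) - pderiv 0 (u 2),
    pderiv 0 (u 1) - pderiv 1 (u 0)]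

theorem crossX_curl (u : Fin 3 → P3) (i : Fin 3) :
    crossX (curl u) i =
      pderiv i (X 0 * u 0 + X 1 * u 1 + X 2 * u 2) - u i - ∑ j, X j * pderiv j (u i) := by
  fin_cases i <;>
    simp only [crossX, curl, Fin.sum_univ_three, Fin.isValue, Fin.reduceFinMk, Fin.zero_eta,
      Fin.mk_one, Matrix.cons_val, Matrix.cons_val_zero, Matrix.cons_val_one, map_add, pderiv_mul,
      pderiv_X_self, pderiv_X_of_ne, ne_eq, Fin.reduceEq, not_false_eq_true] <;>
    ring

/-- `x P₁ + y P₂ + z P₃` is the trace of `M(P₁,P₂,P₃)`. -/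
def traceFreeSet (k : ℤ) : Set (Fin 3 → P3) :=
  {P | (∀ i, memP k (P i)) ∧ X 0 * P 0 + X 1 * P 1 + X 2 * P 2 = 0}

/-- The space `G^{c,k}`. -/
def crossXSet (k : ℤ) : Set (Fin 3 → P3) :=
  {v | ∃ w : Fin 3 → P3, (∀ i, memP (k - 1) (w i)) ∧ v = crossX w}

theorem mapsTo_degreeScale_traceFreeSet (g : ℕ → ℝ) (k : ℤ) :
    Set.MapsTo ((degreeScale g).compLeft (Fin 3)) (traceFreeSet k) (traceFreeSet k) := by
  rintro P ⟨hdeg, hdot⟩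
  refine ⟨fun i => memP_of_support_subset (hdeg i) (support_degreeScale_subset g _), ?_⟩
  simp only [LinearMap.compLeft_apply, Function.comp_apply, X_mul_degreeScale, ← map_add, hdot,
    map_zero]

theorem bijOn_degreeScale_traceFreeSet {g h : ℕ → ℝ} (hgh : ∀ d, g d * h d = 1) (k : ℤ) :
    Set.BijOn ((degreeScale g).compLeft (Fin 3)) (traceFreeSet k) (traceFreeSet k) :=
  Set.InvOn.bijOn (f' := (degreeScale h).compLeft (Fin 3))
    ⟨fun P _ => funext fun i => leftInverse_degreeScale (fun d => by rw [mul_comm, hgh]) (P i),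
      fun P _ => funext fun i => leftInverse_degreeScale hgh (P i)⟩
    (mapsTo_degreeScale_traceFreeSet g k) (mapsTo_degreeScale_traceFreeSet h k)

theorem crossXSet_subset_traceFreeSet (k : ℤ) : crossXSet k ⊆ traceFreeSet k := by
  rintro _ ⟨w, hw, rfl⟩
  refine ⟨fun i => ?_, by simp only [crossX, Matrix.cons_val]; ring⟩
  fin_cases i <;> exact ((hw _).X_mul _).sub ((hw _).X_mul _)

/-- Koszul exactness: `u := -(E + 1)⁻¹ v`, with `E` the Euler operator, is again trace free, and
then `x × curl u = ∇(x · u) - (E + 1) u = v`. -/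
theorem traceFreeSet_subset_crossXSet (k : ℤ) : traceFreeSet k ⊆ crossXSet k := by
  intro v hv
  set u := (degreeScale fun d => -((d : ℝ) + 1)⁻¹).compLeft (Fin 3) v with hu
  obtain ⟨hu_deg, hu_dot⟩ := mapsTo_degreeScale_traceFreeSet _ k hv
  refine ⟨curl u, fun i => ?_, funext fun i => ?_⟩
  · fin_cases i <;> exact ((hu_deg _).pderiv _).sub ((hu_deg _).pderiv _)
  · have hEu : -u i - degreeScale (fun d => (d : ℝ)) (u i) =
        degreeScale (fun d => -((d : ℝ) + 1)) (u i) := by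
      ext n
      simp only [coeff_sub, coeff_neg, coeff_degreeScale]
      ring
    rw [crossX_curl, hu_dot, map_zero, zero_sub, sum_X_mul_pderiv, hEu, hu,
      LinearMap.compLeft_apply, Function.comp_apply, leftInverse_degreeScale fun d => by field_simp]

theorem crossXSet_eq_traceFreeSet (k : ℤ) : crossXSet k = traceFreeSet k :=
  (crossXSet_subset_traceFreeSet k).antisymm (traceFreeSet_subset_crossXSet k)

theorem rowDiv_eq_degreeScale :
    rowDiv = (degreeScale fun d => (d : ℝ) + 3).compLeft (Fin 3) := by
  ext P i : 2
  rw [rowDiv, sum_pderiv_X_mul, Fintype.card_fin, LinearMap.compLeft_apply, Function.comp_apply,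
    Nat.cast_ofNat]

/-- The row-wise divergence is a linear isomorphism from the trace-free space
`{M(P₁,P₂,P₃) : Pᵢ ∈ 𝒫_k, x P₁ + y P₂ + z P₃ = 0}` (identified with the space of its
generating triples) onto `G^{c,k} = {x × w : wᵢ ∈ 𝒫_{k-1}}`. -/
theorem rowDiv_isomorphism_onto_Gck (k : ℕ) :
    (∀ P Q : Fin 3 → P3, rowDiv (P + Q) = rowDiv P + rowDiv Q) ∧
    (∀ (c : ℝ) (P : Fin 3 → P3), rowDiv (c • P) = c • rowDiv P) ∧
    Set.BijOn rowDiv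
      {P : Fin 3 → P3 | (∀ i, memP (k : ℤ) (P i)) ∧
        X 0 * P 0 + X 1 * P 1 + X 2 * P 2 = 0}
      {v : Fin 3 → P3 | ∃ w : Fin 3 → P3, (∀ i, memP ((k : ℤ) - 1) (w i)) ∧ v = crossX w} := by
  rw [rowDiv_eq_degreeScale]
  refine ⟨map_add _, map_smul _, ?_⟩
  change Set.BijOn _ (traceFreeSet k) (crossXSet k)
  rw [crossXSet_eq_traceFreeSet]
  exact bijOn_degreeScale_traceFreeSet (h := fun d => ((d : ℝ) + 3)⁻¹)
    (fun _ => by field_simp) k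
end
end

section
/- For every integer k ≥ 0 and every ρ ∈ (0,1] there exists a constant C > 0 depending only on k and ρ such that: for every bounded convex set T ⊂ ℝ³ of diameter h_T > 0, every point x₀ ∈ ℝ³ and radius r ≥ ρ h_T such that the open ball B(x₀, r) is contained in T, and every polynomial Q : ℝ³ → ℝ of total degree at most k, one has sup_{x ∈ T} |Q(x)| ≤ C · sup_{x ∈ B(x₀, r)} |Q(x)|. -/
/-!
Polynomials of total degree at most `k` form a finite-dimensional space, and a polynomial vanishing
on a nonempty open set is zero; hence the sup of `|P|` over a nonempty bounded open set `U` is a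
norm on that space, and by equivalence of norms it dominates the sup over any compact set `K`.
For the theorem, the substitution `P ↦ P(x₀ + r • X)` preserves the degree and carries `B(0, 1)`
onto `B(x₀, r)`, while `T ⊆ B̄(x₀, diam T) ⊆ B̄(x₀, r / ρ)` is carried into `B̄(0, 1 / ρ)`: the
constant for `K = B̄(0, 1 / ρ)` and `U = B(0, 1)` depends only on `k` and `ρ`.
-/

open MvPolynomial Metric Set

noncomputable section

theorem LinearMap.exists_norm_le_mul_norm_of_injective {𝕜 V E F : Type*}
    [NontriviallyNormedField 𝕜] [CompleteSpace 𝕜] [AddCommGroup V] [Module 𝕜 V]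
    [FiniteDimensional 𝕜 V] [NormedAddCommGroup E] [NormedSpace 𝕜 E]
    [NormedAddCommGroup F] [NormedSpace 𝕜 F] (S : V →ₗ[𝕜] E) (hS : Function.Injective S)
    (T : V →ₗ[𝕜] F) : ∃ C > 0, ∀ v, ‖T v‖ ≤ C * ‖S v‖ := by
  let e := LinearEquiv.ofInjective S hS
  let g : LinearMap.range S →L[𝕜] F :=
    ⟨T ∘ₗ e.symm.toLinearMap, LinearMap.continuous_of_finiteDimensional _⟩
  obtain ⟨C, hC, hg⟩ := g.bound
  refine ⟨C, hC, fun v => ?_⟩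
  simpa [g, e] using hg (e v)

theorem le_csSup_image_of_mem_closure {X : Type*} [TopologicalSpace X] {f : X → ℝ}
    (hf : Continuous f) {U : Set X} (hb : BddAbove (f '' U)) {z : X} (hz : z ∈ closure U) :
    f z ≤ sSup (f '' U) := by
  have hne : (f '' U).Nonempty := (closure_nonempty_iff.1 ⟨z, hz⟩).image f
  have hub : sSup (f '' U) ∈ upperBounds (closure (f '' U)) := by
    rw [upperBounds_closure]; exact (isLUB_csSup hne hb).1
  exact hub (image_closure_subset_closure_image hf (mem_image_of_mem f hz))

namespace MvPolynomial

theorem totalDegree_aeval_le {σ τ R : Type*} [CommSemiring R] {f : σ → MvPolynomial τ R}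
    {d : ℕ} (hf : ∀ i, (f i).totalDegree ≤ d) (P : MvPolynomial σ R) :
    (aeval f P).totalDegree ≤ d * P.totalDegree := by
  conv_lhs => rw [P.as_sum, map_sum]
  refine totalDegree_finsetSum_le fun s hs => ?_
  rw [aeval_monomial, algebraMap_eq]
  refine (totalDegree_mul _ _).trans ?_
  rw [totalDegree_C, zero_add]
  calc (s.prod fun i e => f i ^ e).totalDegree
      ≤ ∑ i ∈ s.support, (f i ^ s i).totalDegree := totalDegree_finsetProd _ _
    _ ≤ ∑ i ∈ s.support, d * s i :=
        Finset.sum_le_sum fun i _ =>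
          (totalDegree_pow _ _).trans (by rw [mul_comm]; gcongr; exact hf i)
    _ = d * s.sum fun _ e => e := by rw [Finsupp.sum, Finset.mul_sum]
    _ ≤ d * P.totalDegree := by gcongr; exact le_totalDegree hs

theorem eq_zero_of_eval_eq_zero_on_isOpen {σ : Type*} [Fintype σ] {P : MvPolynomial σ ℝ}
    {U : Set (σ → ℝ)} (hU : IsOpen U) (hne : U.Nonempty) (h : ∀ x ∈ U, eval x P = 0) :
    P = 0 := by
  obtain ⟨x, hx⟩ := hne
  obtain ⟨δ, hδ, hball⟩ := Metric.isOpen_iff.1 hU x hx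
  refine funext_set (fun i => ball (x i) δ) (fun i => ?_) fun y hy => ?_
  · rw [Real.ball_eq_Ioo]; exact Ioo_infinite (by linarith)
  · rw [map_zero]; exact h y (hball (by rwa [ball_pi x hδ]))

def rescale {σ R : Type*} [CommSemiring R] (a : σ → R) (r : R) :
    MvPolynomial σ R →ₐ[R] MvPolynomial σ R :=
  aeval fun i => C (a i) + C r * X i

section rescale

variable {σ R : Type*} [CommSemiring R] (a : σ → R) (r : R) (P : MvPolynomial σ R)

theorem eval_rescale (y : σ → R) : eval y (rescale a r P) = eval (a + r • y) P := by
  rw [rescale, aeval_eq_bind₁, eval, eval₂Hom_bind₁]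
  congr 2
  ext i
  simp

theorem totalDegree_rescale_le : (rescale a r P).totalDegree ≤ P.totalDegree := by
  refine (totalDegree_aeval_le (fun i => ?_) P).trans (one_mul _).le
  refine (totalDegree_add _ _).trans (max_le ?_ ?_)
  · rw [totalDegree_C]; exact zero_le_one
  · rw [C_mul_X_eq_monomial]
    exact (totalDegree_monomial_le _ _).trans (by simp)

end rescale

section Euclidean

variable {ι : Type*}

def toContinuousMapOn (s : Set (EuclideanSpace ℝ ι)) : MvPolynomial ι ℝ →ₗ[ℝ] C(s, ℝ) where
  toFun P := ⟨fun y => eval (fun i => (y : EuclideanSpace ℝ ι) i) P,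
    ((continuous_eval P).comp (PiLp.continuous_ofLp 2 _)).comp continuous_subtype_val⟩
  map_add' P Q := by ext; simp
  map_smul' c P := by ext; simp

@[simp]
theorem toContinuousMapOn_apply (s : Set (EuclideanSpace ℝ ι)) (P : MvPolynomial ι ℝ) (y : s) :
    toContinuousMapOn s P y = eval (fun i => (y : EuclideanSpace ℝ ι) i) P := rfl

theorem toContinuousMapOn_injective [Fintype ι] {s : Set (EuclideanSpace ℝ ι)}
    (hs : (interior s).Nonempty) :
    Function.Injective (toContinuousMapOn s) := by
  refine (injective_iff_map_eq_zero _).2 fun P hP => ?_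
  obtain ⟨y, hy⟩ := hs
  refine eq_zero_of_eval_eq_zero_on_isOpen (isOpen_interior.preimage (PiLp.continuous_toLp 2 _))
    ⟨WithLp.ofLp y, hy⟩ fun x hx => ?_
  simpa using DFunLike.congr_fun hP ⟨_, interior_subset hx⟩

theorem exists_abs_eval_le_mul_sSup [Fintype ι] (k : ℕ) {K U : Set (EuclideanSpace ℝ ι)}
    (hK : IsCompact K) (hU : IsOpen U) (hU₀ : U.Nonempty) (hUb : Bornology.IsBounded U) :
    ∃ C > 0, ∀ P : MvPolynomial ι ℝ, P.totalDegree ≤ k → ∀ x ∈ K,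
      |eval (fun i => x i) P| ≤ C * sSup ((fun y => |eval (fun i => y i) P|) '' U) := by
  have : CompactSpace K := isCompact_iff_compactSpace.1 hK
  have : CompactSpace (closure U) := isCompact_iff_compactSpace.1 hUb.isCompact_closure
  let V := restrictTotalDegree ι ℝ k
  have hinj : Function.Injective (toContinuousMapOn (closure U) ∘ₗ V.subtype) :=
    (toContinuousMapOn_injective (hU₀.mono (hU.subset_interior_iff.2 subset_closure))).comp
      Subtype.val_injective
  obtain ⟨C, hC, hCle⟩ := LinearMap.exists_norm_le_mul_norm_of_injective _ hinj
    (toContinuousMapOn K ∘ₗ V.subtype)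
  refine ⟨C, hC, fun P hP x hx => ?_⟩
  have hcont : Continuous fun y : EuclideanSpace ℝ ι => |eval (fun i => y i) P| :=
    ((continuous_eval P).comp (PiLp.continuous_ofLp 2 _)).abs
  have hbdd : BddAbove ((fun y : EuclideanSpace ℝ ι => |eval (fun i => y i) P|) '' U) :=
    (hUb.isCompact_closure.bddAbove_image hcont.continuousOn).mono (image_mono subset_closure)
  have hclosure : ‖toContinuousMapOn (closure U) P‖ ≤
      sSup ((fun y : EuclideanSpace ℝ ι => |eval (fun i => y i) P|) '' U) :=
    (ContinuousMap.norm_le _ (Real.sSup_nonneg (by simp))).2 fun z =>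
      le_csSup_image_of_mem_closure hcont hbdd z.2
  calc |eval (fun i => x i) P| = ‖toContinuousMapOn K P ⟨x, hx⟩‖ := rfl
    _ ≤ ‖toContinuousMapOn K P‖ := ContinuousMap.norm_coe_le_norm _ _
    _ ≤ C * ‖toContinuousMapOn (closure U) P‖ :=
        hCle ⟨P, (mem_restrictTotalDegree _ _ _).2 hP⟩
    _ ≤ _ := by gcongr

end Euclidean
end MvPolynomial

theorem image_comp_affinity_unitBall {E β : Type*} [NormedAddCommGroup E] [NormedSpace ℝ E]
    (g : E → β) (x₀ : E) {r : ℝ} (hr : 0 < r) :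
    (fun y => g (x₀ + r • y)) '' ball 0 1 = g '' ball x₀ r := by
  rw [← affinity_unitBall hr x₀, ← image_smul, ← image_vadd, image_image, image_image]
  rfl

/-- On a bounded convex set `T ⊂ ℝ³` of positive diameter containing a ball
`B(x₀, r)` with `r ≥ ρ · diam T`, the sup of `|Q|` over `T` is controlled by the sup of
`|Q|` over the ball, uniformly over such configurations, for polynomials `Q` of total
degree at most `k`. -/
theorem sup_poly_le_sup_ball (k : ℕ) (ρ : ℝ) (hρ : ρ ∈ Set.Ioc (0 : ℝ) 1) :
    ∃ C > (0 : ℝ), ∀ T : Set (EuclideanSpace ℝ (Fin 3)),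
      Convex ℝ T → Bornology.IsBounded T → 0 < Metric.diam T →
      ∀ (x₀ : EuclideanSpace ℝ (Fin 3)) (r : ℝ), ρ * Metric.diam T ≤ r →
        Metric.ball x₀ r ⊆ T →
        ∀ Q : MvPolynomial (Fin 3) ℝ, Q.totalDegree ≤ k →
          ∀ x ∈ T, |eval (fun i => x i) Q| ≤
            C * sSup ((fun y : EuclideanSpace ℝ (Fin 3) =>
              |eval (fun i => y i) Q|) '' Metric.ball x₀ r) := by
  obtain ⟨C, hC, hK⟩ := exists_abs_eval_le_mul_sSup k
    (isCompact_closedBall (0 : EuclideanSpace ℝ (Fin 3)) ρ⁻¹) isOpen_ball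
    ⟨0, mem_ball_self one_pos⟩ isBounded_ball
  refine ⟨C, hC, fun T _ hTb hdiam x₀ r hr hball Q hQ x hx => ?_⟩
  have hr₀ : 0 < r := (mul_pos hρ.1 hdiam).trans_le hr
  let Q' := rescale (fun i => x₀ i) r Q
  have heval (z : EuclideanSpace ℝ (Fin 3)) :
      eval (fun i => z i) Q' = eval (fun i => (x₀ + r • z) i) Q := by
    rw [eval_rescale]; rfl
  set y := r⁻¹ • (x - x₀)
  have hxy : x₀ + r • y = x := by simp [y, smul_smul, hr₀.ne']
  have hy : y ∈ closedBall 0 ρ⁻¹ := by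
    rw [mem_closedBall_zero_iff, norm_smul, Real.norm_of_nonneg (inv_nonneg.2 hr₀.le),
      ← dist_eq_norm]
    calc r⁻¹ * dist x x₀ ≤ r⁻¹ * diam T := by
          gcongr; exact dist_le_diam_of_mem hTb hx (hball (mem_ball_self hr₀))
      _ ≤ ρ⁻¹ := by
          rw [inv_mul_le_iff₀ hr₀, ← div_eq_mul_inv, le_div_iff₀ hρ.1]; linarith
  calc |eval (fun i => x i) Q| = |eval (fun i => y i) Q'| := by rw [heval, hxy]
    _ ≤ C * sSup ((fun z : EuclideanSpace ℝ (Fin 3) => |eval (fun i => z i) Q'|) '' ball 0 1) :=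
        hK Q' ((totalDegree_rescale_le _ _ _).trans hQ) y hy
    _ = _ := by
        simp_rw [heval]
        rw [image_comp_affinity_unitBall (fun z => |eval (fun i => z i) Q|) x₀ hr₀]
end
end

section
/- Let k ≥ 0 and let P₁, P₂ be real polynomials in the two variables x, y of total degree at most k. Then x P₁ + y P₂ = 0 if and only if there exists a polynomial Q in x, y of total degree at most k − 1 such that P₁ = −y Q and P₂ = x Q. -/
open MvPolynomial

noncomputable section

/-- Real polynomials in the two variables `x, y` (indexed `0, 1`). -/
abbrev P2 := MvPolynomial (Fin 2) ℝ

/-- Membership in `𝒫²_m`, the space of polynomials of total degree at most `m`,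
with the convention `𝒫²_m = {0}` for `m < 0`. -/
def memP2 (m : ℤ) (p : P2) : Prop := p = 0 ∨ (p.totalDegree : ℤ) ≤ m

namespace MvPolynomial

variable {σ R : Type*} [CommRing R] [IsDomain R]

theorem totalDegree_X_mul {r : MvPolynomial σ R} (hr : r ≠ 0) (i : σ) :
    (X i * r).totalDegree = r.totalDegree + 1 := by
  rw [totalDegree_mul_of_isDomain (X_ne_zero i) hr, totalDegree_X, add_comm]

/-- Since `X i` is prime and does not divide `X j`, it must divide `q`. -/
theorem X_mul_add_X_mul_eq_zero_iff {i j : σ} (hij : i ≠ j) (p q : MvPolynomial σ R) :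
    X i * p + X j * q = 0 ↔ ∃ r, p = -(X j * r) ∧ q = X i * r := by
  constructor
  · intro h
    have hdvd : X i ∣ X j * q := ⟨-p, by linear_combination h⟩
    obtain ⟨r, rfl⟩ := (X_dvd_mul_iff.mp hdvd).resolve_left (X_dvd_X.not.mpr hij)
    refine ⟨r, ?_, rfl⟩
    have hcancel : X i * (p + X j * r) = 0 := by linear_combination h
    linear_combination (mul_eq_zero.mp hcancel).resolve_left (X_ne_zero i)
  · rintro ⟨r, rfl, rfl⟩
    ring

end MvPolynomial

theorem memP2_of_memP2_X_mul {m : ℤ} {i : Fin 2} {Q : P2} (h : memP2 m (X i * Q)) :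
    memP2 (m - 1) Q := by
  rcases eq_or_ne Q 0 with hQ | hQ
  · exact Or.inl hQ
  · have hdeg := h.resolve_left (mul_ne_zero (X_ne_zero i) hQ)
    rw [totalDegree_X_mul hQ] at hdeg
    exact Or.inr (by omega)

theorem trace_free_characterization_2d_general (k : ℕ) (P₁ P₂ : P2)
    (h2 : memP2 (k : ℤ) P₂) :
    X 0 * P₁ + X 1 * P₂ = 0 ↔
    ∃ Q : P2, memP2 ((k : ℤ) - 1) Q ∧ P₁ = -(X 1 * Q) ∧ P₂ = X 0 * Q := by
  rw [X_mul_add_X_mul_eq_zero_iff (by decide : (0 : Fin 2) ≠ 1)]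
  constructor
  · rintro ⟨Q, hP₁, rfl⟩
    exact ⟨Q, memP2_of_memP2_X_mul h2, hP₁, rfl⟩
  · rintro ⟨Q, -, hQ⟩
    exact ⟨Q, hQ⟩

/-- Two-dimensional characterization of the trace-free Koszul space: for `P₁, P₂` of total
degree at most `k`, `x P₁ + y P₂ = 0` iff `P₁ = -y Q` and `P₂ = x Q` for some `Q` of total
degree at most `k - 1`. -/
theorem trace_free_characterization_2d (k : ℕ) (P₁ P₂ : P2)
    (h1 : memP2 (k : ℤ) P₁) (h2 : memP2 (k : ℤ) P₂) :
    X 0 * P₁ + X 1 * P₂ = 0 ↔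
    ∃ Q : P2, memP2 ((k : ℤ) - 1) Q ∧ P₁ = -(X 1 * Q) ∧ P₂ = X 0 * Q :=
  trace_free_characterization_2d_general k P₁ P₂ h2
end
end
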